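/- The elliptic curve E₂ : y² + xy + y = x³ − x² + ((−541 + 131√17)/2)x + (3624 − 879√17) over K = Q(√17) has a K-rational point of order 13. -/

import Mathlib

/-!
Take `P = (-12 + 3√17, (85 - 21√17)/2)`. Doubling it three times gives `2P`, `4P`, `8P`, and the
chord through `8P` and `4P` gives `12P = -P`, so `13P = 0` while `P ≠ 0`. These coordinate
identities use nothing about `√17` but `(√17)² = 17`, so they are checked in any field of
characteristic zero containing a square root of `17`.
-/

open IntermediateField WeierstrassCurve Affine

namespace WeierstrassCurve.Affine.Point

variable {F : Type*} [Field F] [DecidableEq F] {W : Affine F}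

lemma some_add_some_eq_some {x₁ y₁ x₂ y₂ x₃ y₃ ℓ : F} {h₁ : W.Nonsingular x₁ y₁}
    {h₂ : W.Nonsingular x₂ y₂} (h₃ : W.Nonsingular x₃ y₃)
    (hxy : ¬(x₁ = x₂ ∧ y₁ = W.negY x₂ y₂)) (hℓ : W.slope x₁ x₂ y₁ y₂ = ℓ)
    (hx₃ : W.addX x₁ x₂ ℓ = x₃) (hy₃ : W.addY x₁ x₂ y₁ ℓ = y₃) :
    some x₁ y₁ h₁ + some x₂ y₂ h₂ = some x₃ y₃ h₃ := by
  subst hℓ hx₃ hy₃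
  exact add_some hxy

end WeierstrassCurve.Affine.Point

open WeierstrassCurve.Affine.Point

-- Reducible, so that `grind` sees the coefficients.
abbrev E₂ {F : Type*} [Field F] (s : F) : WeierstrassCurve F :=
  { a₁ := 1, a₂ := -1, a₃ := 1, a₄ := (-541 + 131 * s) / 2, a₆ := 3624 - 879 * s }

section E₂

variable {F : Type*} [Field F] [CharZero F] {s : F}

lemma E₂_Δ_ne_zero (hs : s ^ 2 = 17) : (E₂ s).Δ ≠ 0 := by
  grind [WeierstrassCurve.Δ, b₂, b₄, b₆, b₈]

lemma E₂_nonsingular (hs : s ^ 2 = 17) {x y : F} (h : (E₂ s).toAffine.Equation x y) :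
    (E₂ s).toAffine.Nonsingular x y :=
  (equation_iff_nonsingular_of_Δ_ne_zero (E₂_Δ_ne_zero hs)).mp h

theorem E₂_exists_addOrderOf_eq_thirteen [DecidableEq F] (hs : s ^ 2 = 17) :
    ∃ P : (E₂ s).toAffine.Point, addOrderOf P = 13 := by
  have h₁ : (E₂ s).toAffine.Nonsingular (-12 + 3 * s) ((85 - 21 * s) / 2) :=
    E₂_nonsingular hs (by grind [equation_iff])
  have h₂ : (E₂ s).toAffine.Nonsingular (62 - 15 * s) ((-1415 + 343 * s) / 2) :=
    E₂_nonsingular hs (by grind [equation_iff])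
  have h₄ : (E₂ s).toAffine.Nonsingular (17 - 4 * s) ((-179 + 43 * s) / 2) :=
    E₂_nonsingular hs (by grind [equation_iff])
  have h₈ : (E₂ s).toAffine.Nonsingular (4 - s) ((-63 + 15 * s) / 2) :=
    E₂_nonsingular hs (by grind [equation_iff])
  set P := some _ _ h₁
  have hP₂ : 2 • P = some _ _ h₂ := by
    rw [two_nsmul]
    refine some_add_some_eq_some h₂ (ℓ := 4 - s) ?_ ?_ ?_ ?_ <;>
      grind [Affine.slope, negY, addX, addY, negAddY]
  have hP₄ : 4 • P = some _ _ h₄ := by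
    rw [show 4 = 2 * 2 from rfl, mul_nsmul, hP₂, two_nsmul]
    refine some_add_some_eq_some h₄ (ℓ := -9 + 2 * s) ?_ ?_ ?_ ?_ <;>
      grind [Affine.slope, negY, addX, addY, negAddY]
  have hP₈ : 8 • P = some _ _ h₈ := by
    rw [show 8 = 4 * 2 from rfl, mul_nsmul, hP₄, two_nsmul]
    refine some_add_some_eq_some h₈ (ℓ := -5 + s) ?_ ?_ ?_ ?_ <;>
      grind [Affine.slope, negY, addX, addY, negAddY]
  have hP₁₂ : 12 • P = -P := by
    rw [show 12 = 8 + 4 from rfl, add_nsmul, hP₈, hP₄, neg_some]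
    refine some_add_some_eq_some _ (ℓ := (-5 + s) / 2) ?_ ?_ ?_ ?_ <;>
      grind [Affine.slope, negY, addX, addY, negAddY]
  have : Fact (Nat.Prime 13) := ⟨by norm_num⟩
  refine ⟨P, addOrderOf_eq_prime ?_ (some_ne_zero h₁)⟩
  rw [succ_nsmul, hP₁₂, neg_add_cancel]

end E₂

/-- The elliptic curve
`E₂ : y² + xy + y = x³ − x² + ((−541 + 131√17)/2)x + (3624 − 879√17)`
over `K = ℚ(√17)` has a `K`-rational point of order `13`. -/
theorem E2_has_point_of_order_13
    (s : ℚ⟮Real.sqrt 17⟯) (hs : (s : ℝ) = Real.sqrt 17)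
    (W : WeierstrassCurve ℚ⟮Real.sqrt 17⟯)
    (hW : W = { a₁ := 1, a₂ := -1, a₃ := 1,
                a₄ := (-541 + 131 * s) / 2, a₆ := 3624 - 879 * s }) :
    ∃ P : W.toAffine.Point, addOrderOf P = 13 := by
  have hs₂ : s ^ 2 = 17 := by
    apply Subtype.ext
    push_cast
    rw [hs, Real.sq_sqrt (by norm_num)]
    norm_cast
  subst hW
  exact E₂_exists_addOrderOf_eq_thirteen hs₂
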